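/- arXiv:2209.00899 — 3 statements merged into one kernel-verified Lean document; each statement's English description precedes it below -/
import Mathlib

section
/- Let p be an odd prime and E ≤ 𝔽_p^{p-1} the line spanned by b = (1, -1, 0, ..., 0) (i.e. b_1 = 1, b_2 = -1, b_i = 0 for i ≥ 3). If u ∈ 𝔽_pˣ is such that the index-multiplication permutation P_u maps E to itself, then u = 1, or p = 3 and u = 2. -/
/-- For `u ∈ 𝔽_pˣ`, the linear map `P_u` on `𝔽_p^{p-1}` (coordinates indexed by `𝔽_pˣ`) given
by permuting coordinates according to index-multiplication, `(v P_u)_i = v_{u⁻¹ i}`. -/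
def permMul (p : ℕ) (u : (ZMod p)ˣ) :
    ((ZMod p)ˣ → ZMod p) →ₗ[ZMod p] ((ZMod p)ˣ → ZMod p) where
  toFun v := fun i => v (u⁻¹ * i)
  map_add' := by intros; rfl
  map_smul' := by intros; rfl

/-- Let `p` be an odd prime and `E ≤ 𝔽_p^{p-1}` the line spanned by `b = (1, -1, 0, …, 0)`
(i.e. `b_1 = 1`, `b_2 = -1`, `b_i = 0` for the other indices).  If `u ∈ 𝔽_pˣ` is such that the
index-multiplication permutation `P_u` maps `E` to itself, then `u = 1`, or `p = 3` and
`u = 2`. -/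
theorem guptaSidki_vector_stabilizer (p : ℕ) [Fact p.Prime] (hp : Odd p) (u : (ZMod p)ˣ)
    (hu : Submodule.map (permMul p u)
        (Submodule.span (ZMod p)
          {fun i : (ZMod p)ˣ => if (i : ZMod p) = 1 then 1
            else if (i : ZMod p) = 2 then -1 else 0}) =
      Submodule.span (ZMod p)
        {fun i : (ZMod p)ˣ => if (i : ZMod p) = 1 then 1
          else if (i : ZMod p) = 2 then (-1 : ZMod p) else 0}) :
    u = 1 ∨ (p = 3 ∧ (u : ZMod p) = 2) := by
  have hpprime : p.Prime := Fact.out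
  set b : (ZMod p)ˣ → ZMod p := fun i => if (i : ZMod p) = 1 then 1
      else if (i : ZMod p) = 2 then -1 else 0 with hb
  have hmem : permMul p u b ∈ Submodule.span (ZMod p) {b} := by
    rw [← hu]
    exact Submodule.mem_map_of_mem (Submodule.mem_span_singleton_self b)
  obtain ⟨c, hc⟩ := Submodule.mem_span_singleton.mp hmem
  -- 2 is coprime to p
  have hpne2 : p ≠ 2 := by
    rintro rfl
    exact (Nat.not_even_iff_odd.mpr hp) even_two
  have hcop : Nat.Coprime 2 p :=
    (Nat.coprime_primes Nat.prime_two hpprime).mpr (fun h => hpne2 h.symm)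
  set t : (ZMod p)ˣ := ZMod.unitOfCoprime 2 hcop with ht
  have htc : (t : ZMod p) = 2 := by
    simp [ht, ZMod.coe_unitOfCoprime]
  have h21 : (2 : ZMod p) ≠ 1 := by
    intro h
    have : (1 : ZMod p) = 0 := by linear_combination h
    exact one_ne_zero this
  have h20 : (2 : ZMod p) ≠ 0 := by
    intro h
    have hdvd : (p : ℕ) ∣ 2 :=
      (ZMod.natCast_eq_zero_iff 2 p).mp (by exact_mod_cast h)
    exact hpne2 ((Nat.prime_dvd_prime_iff_eq hpprime Nat.prime_two).mp hdvd)
  -- equation at index u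
  have eq1 : c * b u = 1 := by
    have := congrFun hc u
    simpa [permMul, hb] using this
  -- equation at index u * t
  have eq2 : c * b (u * t) = -1 := by
    have := congrFun hc (u * t)
    simp only [permMul, LinearMap.coe_mk, AddHom.coe_mk, Pi.smul_apply, smul_eq_mul] at this
    rw [← mul_assoc, inv_mul_cancel, one_mul] at this
    rw [this, hb]
    simp [htc, h21]
  by_cases h1 : (u : ZMod p) = 1
  · exact Or.inl (Units.ext h1)
  by_cases h2 : (u : ZMod p) = 2
  · -- c = -1
    have hbu : b u = -1 := by simp only [hb, h2]; rw [if_neg h21]; simp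
    have hcneg : c = -1 := by
      rw [hbu] at eq1
      linear_combination -eq1
    have hval : b (u * t) = 1 := by
      rw [hcneg] at eq2
      linear_combination -eq2
    have hcoe : ((u * t : (ZMod p)ˣ) : ZMod p) = 4 := by
      push_cast [htc, h2]
      ring
    by_cases h41 : (4 : ZMod p) = 1
    · have h30 : (3 : ZMod p) = 0 := by linear_combination h41
      have hdvd : (p : ℕ) ∣ 3 := by
        have := (ZMod.natCast_eq_zero_iff 3 p).mp (by exact_mod_cast h30)
        exact this
      have hp3 : p = 3 := by
        rcases (Nat.prime_dvd_prime_iff_eq hpprime Nat.prime_three).mp hdvd with h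
        exact h
      exact Or.inr ⟨hp3, h2⟩
    · exfalso
      by_cases h42 : (4 : ZMod p) = 2
      · exact h20 (by linear_combination h42)
      · rw [hb] at hval
        simp only [hcoe, h41, h42, if_false] at hval
        exact one_ne_zero hval.symm
  · exfalso
    have hbu : b u = 0 := by simp only [hb]; rw [if_neg h1, if_neg h2]
    rw [hbu, mul_zero] at eq1
    exact one_ne_zero eq1.symm
end

section
/- Let G be a non-constant multi-GGS group. Then the normaliser of the directed group B in Aut(X*) stabilises the vertex 0 of the first layer, and the section map at 0 maps Nor(B) into Nor(B) and Cen(B) into Cen(B). -/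
/-!  Automorphisms of the `p`-regular rooted tree `X*`, `X = {0, …, p-1} = ℤ/pℤ`, encoded by
their portraits: an automorphism is the collection of its labels `g|^v ∈ Sym(X)`, `v ∈ X*`. -/

/-- The automorphism group of the `p`-regular rooted tree, encoded via portraits. -/
def TreeAut (p : ℕ) := List (ZMod p) → Equiv.Perm (ZMod p)

instance {p : ℕ} : CoeFun (TreeAut p) (fun _ => List (ZMod p) → Equiv.Perm (ZMod p)) :=
  ⟨fun g => g⟩

/-- The action of a portrait on the words of the tree. -/
def pact {p : ℕ} : TreeAut p → List (ZMod p) → List (ZMod p)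
  | _, [] => []
  | L, x :: v => L [] x :: pact (fun w => L (x :: w)) v

/-- The inverse action of a portrait on the words of the tree. -/
def pactInv {p : ℕ} : TreeAut p → List (ZMod p) → List (ZMod p)
  | _, [] => []
  | L, y :: v => (L [])⁻¹ y :: pactInv (fun w => L ((L [])⁻¹ y :: w)) v

theorem pactInv_pact {p : ℕ} (L : TreeAut p) (v : List (ZMod p)) :
    pactInv L (pact L v) = v := by
  induction v generalizing L with
  | nil => rfl
  | cons x v ih =>
    simp [pact, pactInv]
    exact ih _

theorem pact_pactInv {p : ℕ} (L : TreeAut p) (v : List (ZMod p)) :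
    pact L (pactInv L v) = v := by
  induction v generalizing L with
  | nil => rfl
  | cons x v ih =>
    simp [pact, pactInv]
    exact ih _

theorem pact_one {p : ℕ} (v : List (ZMod p)) :
    pact (fun _ => 1 : TreeAut p) v = v := by
  induction v with
  | nil => rfl
  | cons x v ih => simpa [pact] using ih

theorem pact_mulP {p : ℕ} (L M : TreeAut p) (v : List (ZMod p)) :
    pact (fun u => L (pact M u) * M u) v = pact L (pact M v) := by
  induction v generalizing L M with
  | nil => rfl
  | cons x v ih =>
    simp only [pact, Equiv.Perm.mul_apply]
    exact congrArg _ (ih (fun u => L ((M []) x :: u)) (fun w => M (x :: w)))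

instance {p : ℕ} : One (TreeAut p) := ⟨fun _ => 1⟩
instance {p : ℕ} : Mul (TreeAut p) := ⟨fun L M => fun v => L (pact M v) * M v⟩
instance {p : ℕ} : Inv (TreeAut p) := ⟨fun L => fun v => (L (pactInv L v))⁻¹⟩

theorem TreeAut.mul_def {p : ℕ} (L M : TreeAut p) (v : List (ZMod p)) :
    (L * M) v = L (pact M v) * M v := rfl
theorem TreeAut.one_def {p : ℕ} (v : List (ZMod p)) : (1 : TreeAut p) v = 1 := rfl
theorem TreeAut.inv_def {p : ℕ} (L : TreeAut p) (v : List (ZMod p)) :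
    L⁻¹ v = (L (pactInv L v))⁻¹ := rfl

instance {p : ℕ} : Group (TreeAut p) where
  mul_assoc a b c := by
    funext v
    show (a * b) (pact c v) * c v = a (pact (b * c) v) * ((b * c) v)
    show a (pact b (pact c v)) * b (pact c v) * c v
        = a (pact (fun u => b (pact c u) * c u) v) * (b (pact c v) * c v)
    rw [pact_mulP, mul_assoc]
  one_mul a := by
    funext v
    show (1 : TreeAut p) (pact a v) * a v = a v
    simp [TreeAut.one_def]
  mul_one a := by
    funext v
    show a (pact (fun _ => 1) v) * (1 : Equiv.Perm (ZMod p)) = a v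
    rw [pact_one, mul_one]
  inv_mul_cancel a := by
    funext v
    show (a (pactInv a (pact a v)))⁻¹ * a v = (1 : TreeAut p) v
    rw [pactInv_pact, TreeAut.one_def, inv_mul_cancel]

/-- The rooted automorphism with label `σ` at the root and trivial labels elsewhere. -/
def rootedAut {p : ℕ} (σ : Equiv.Perm (ZMod p)) : TreeAut p :=
  fun v => if v = [] then σ else 1

/-- The rooted automorphism `a` given by the `p`-cycle `σ = (0 1 … p-1)`, `x ↦ x + 1`. -/
def aAut (p : ℕ) : TreeAut p := rootedAut (Equiv.addRight (1 : ZMod p))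

/-- The section `g|_x` of `g` at the first-layer vertex `x`. -/
def sect {p : ℕ} (g : TreeAut p) (x : ZMod p) : TreeAut p := fun v => g (x :: v)

/-- The `n`-th diagonal `κ_n(g) = ψ_n⁻¹(g, …, g)`. -/
def kappa {p : ℕ} (n : ℕ) (g : TreeAut p) : TreeAut p :=
  fun v => if n ≤ v.length then g (v.drop n) else 1

/-- `ψ_n⁻¹(g, 1, …, 1)`: the automorphism acting as `g` below the vertex `0^n` and trivially
elsewhere. -/
def embAt {p : ℕ} (n : ℕ) (g : TreeAut p) : TreeAut p :=
  fun v => if List.replicate n (0 : ZMod p) <+: v then g (v.drop n) else 1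

/-- The scalar product of two vectors in `𝔽_p^r`. -/
def dotp {p r : ℕ} (n m : Fin r → ZMod p) : ZMod p := ∑ j, n j * m j

/-- The directed generator `b^n` of the multi-GGS group with defining data
`e : ℤ/pℤ → 𝔽_p^r` (the columns of the matrix `E`, with `e 0 = 0`): it satisfies
`ψ_1(b^n) = (b^n, a^{n·e_1}, …, a^{n·e_{p-1}})`. -/
def bAut {p r : ℕ} (e : ZMod p → Fin r → ZMod p) (n : Fin r → ZMod p) : TreeAut p :=
  fun v =>
    match v.getLast? with
    | none => 1
    | some i =>
      if ∀ x ∈ v.dropLast, x = 0 then Equiv.addRight (dotp n (e i)) else 1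

/-- The multi-GGS group `G_E = ⟨A ∪ B⟩` associated to the data `e`. -/
def GGS {p r : ℕ} (e : ZMod p → Fin r → ZMod p) : Subgroup (TreeAut p) :=
  Subgroup.closure ({aAut p} ∪ Set.range (bAut e))

open scoped commutatorElement

/-- The element `c̲ = ψ_1⁻¹([b^{s_1}, a], 1, …, 1)`. -/
def cAut {p r : ℕ} (e : ZMod p → Fin r → ZMod p) : TreeAut p :=
  embAt 1 ⁅bAut e (fun j => if (j : ℕ) = 0 then 1 else 0), aAut p⁆

/-- The regularisation `G_reg = ⟨G ∪ {c̲}⟩` of a multi-GGS group. -/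
def GGSreg {p r : ℕ} (e : ZMod p → Fin r → ZMod p) : Subgroup (TreeAut p) :=
  Subgroup.closure ({aAut p, cAut e} ∪ Set.range (bAut e))

/-- The word length on `Aut(X*)` with respect to the generating set `A ∪ B` of the multi-GGS
group determined by `e`. -/
noncomputable def ggsLength {p r : ℕ} (e : ZMod p → Fin r → ZMod p) (g : TreeAut p) : ℕ :=
  sInf {m | ∃ l : List (TreeAut p),
    (∀ x ∈ l, x ∈ Subgroup.zpowers (aAut p) ∨ x ∈ Set.range (bAut e)) ∧
    l.length = m ∧ l.prod = g}

/-- `e` defines a *non-constant* multi-GGS group: the defining space `E` is not the line of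
constant vectors. -/
def NonConstant {p r : ℕ} (e : ZMod p → Fin r → ZMod p) : Prop :=
  (∃ i j : ZMod p, i ≠ 0 ∧ j ≠ 0 ∧ e i ≠ e j) ∧
    LinearIndependent (ZMod p) (fun j : Fin r => fun i : ZMod p => e i j)

/-- `e` defines a *symmetric* GGS group: `r = 1`, the defining space is contained in the
symmetric subspace `{λ : λ_i = λ_{p-i}}`, and the group is non-constant. -/
def IsSymmetricGGS {p r : ℕ} (e : ZMod p → Fin r → ZMod p) : Prop :=
  r = 1 ∧ (∀ (i : ZMod p) (j : Fin r), e i j = e (-i) j) ∧ NonConstant e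

/-- `e` defines a *regular* multi-GGS group: non-constant and not symmetric. -/
def IsRegularGGS {p r : ℕ} (e : ZMod p → Fin r → ZMod p) : Prop :=
  NonConstant e ∧ ¬ IsSymmetricGGS e

/-!
An element `b^n ≠ 1` of `B` has trivial root label, its section at `0` is `b^n` itself and its
sections at `x ≠ 0` are rooted. If `g` normalises `B` but moves `0` to `x ≠ 0`, then the section
at `x` of `g b^n g⁻¹ ∈ B` is on the one hand rooted and on the other hand conjugate to `b^n`;
comparing root labels forces `b^n = 1`. Once `g` fixes `0`, taking sections at `0` turns
conjugation by `g` into conjugation by `g|_0` on `B`, which gives the other two claims.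
-/

section Sections

variable {p : ℕ}

theorem TreeAut.mul_apply_nil (g h : TreeAut p) : (g * h) [] = g [] * h [] := rfl

theorem TreeAut.inv_apply_nil (g : TreeAut p) : g⁻¹ [] = (g [])⁻¹ := rfl

theorem pact_cons (g : TreeAut p) (x : ZMod p) (v : List (ZMod p)) :
    pact g (x :: v) = g [] x :: pact (sect g x) v := rfl

theorem sect_mul (g h : TreeAut p) (x : ZMod p) :
    sect (g * h) x = sect g (h [] x) * sect h x := rfl

theorem sect_inv (g : TreeAut p) (x : ZMod p) : sect g⁻¹ (g [] x) = (sect g x)⁻¹ := by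
  refine eq_inv_of_mul_eq_one_left ?_
  rw [← sect_mul, inv_mul_cancel]
  rfl

theorem sect_conj_of_apply_nil_eq {g h : TreeAut p} {x : ZMod p} (hx : h [] x = x) :
    sect (g * h * g⁻¹) (g [] x) = sect g x * sect h x * (sect g x)⁻¹ := by
  have hg : g⁻¹ [] (g [] x) = x := (g []).symm_apply_apply x
  rw [sect_mul, hg, sect_mul, hx, sect_inv]

theorem rootedAut_one : rootedAut (1 : Equiv.Perm (ZMod p)) = 1 := by
  funext v
  simp [rootedAut, TreeAut.one_def]

theorem eq_one_of_conj_eq_rootedAut {g h : TreeAut p} {σ : Equiv.Perm (ZMod p)}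
    (hh : h [] = 1) (hc : g * h * g⁻¹ = rootedAut σ) : h = 1 := by
  have hσ : σ = 1 := by
    have := congrFun hc []
    rw [TreeAut.mul_apply_nil, TreeAut.mul_apply_nil, TreeAut.inv_apply_nil, hh, mul_one,
      mul_inv_cancel] at this
    simpa [rootedAut] using this.symm
  rw [hσ, rootedAut_one, mul_inv_eq_one, mul_eq_left] at hc
  exact hc

end Sections

section DirectedGroup

variable {p r : ℕ} {e : ZMod p → Fin r → ZMod p}

theorem dotp_add_left (n m w : Fin r → ZMod p) : dotp (n + m) w = dotp n w + dotp m w := by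
  simp [dotp, add_mul, Finset.sum_add_distrib]

theorem bAut_nil (n : Fin r → ZMod p) : bAut e n [] = 1 := rfl

theorem bAut_append_singleton (n : Fin r → ZMod p) (l : List (ZMod p)) (i : ZMod p) :
    bAut e n (l ++ [i]) = if ∀ x ∈ l, x = 0 then Equiv.addRight (dotp n (e i)) else 1 := by
  simp [bAut]

theorem bAut_cons_zero (he0 : e 0 = 0) (n : Fin r → ZMod p) (w : List (ZMod p)) :
    bAut e n (0 :: w) = bAut e n w := by
  rcases List.eq_nil_or_concat w with rfl | ⟨l, i, rfl⟩
  · show bAut e n ([] ++ [0]) = 1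
    rw [bAut_append_singleton]
    simp [he0, dotp]
  · rw [List.concat_eq_append, ← List.cons_append, bAut_append_singleton,
      bAut_append_singleton]
    simp

theorem bAut_cons_cons_of_ne_zero (n : Fin r → ZMod p) {x : ZMod p} (hx : x ≠ 0)
    (y : ZMod p) (u : List (ZMod p)) : bAut e n (x :: y :: u) = 1 := by
  obtain ⟨l, i, h⟩ := (List.eq_nil_or_concat (y :: u)).resolve_left (List.cons_ne_nil y u)
  rw [h, List.concat_eq_append, ← List.cons_append, bAut_append_singleton, if_neg]
  exact fun hall => hx (hall x List.mem_cons_self)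

theorem sect_bAut_zero (he0 : e 0 = 0) (n : Fin r → ZMod p) : sect (bAut e n) 0 = bAut e n :=
  funext (bAut_cons_zero he0 n)

theorem sect_bAut_of_ne_zero (n : Fin r → ZMod p) {x : ZMod p} (hx : x ≠ 0) :
    sect (bAut e n) x = rootedAut (Equiv.addRight (dotp n (e x))) := by
  funext w
  rcases w with _ | ⟨y, u⟩
  · show bAut e n ([] ++ [x]) = _
    rw [bAut_append_singleton]
    simp [rootedAut]
  · show bAut e n (x :: y :: u) = _
    simp [bAut_cons_cons_of_ne_zero n hx, rootedAut]

-- `b^m` only changes letters that follow a nonzero letter, and such letters never affect the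
-- labels of `b^n`.
theorem bAut_apply_pact_bAut (he0 : e 0 = 0) (n m : Fin r → ZMod p) (v : List (ZMod p)) :
    bAut e n (pact (bAut e m) v) = bAut e n v := by
  induction v with
  | nil => rfl
  | cons x w ih =>
    rw [pact_cons, bAut_nil, Equiv.Perm.one_apply]
    by_cases hx : x = 0
    · subst hx
      rw [sect_bAut_zero he0, bAut_cons_zero he0, ih, bAut_cons_zero he0]
    · rcases w with _ | ⟨y, u⟩
      · rfl
      · rw [pact_cons, bAut_cons_cons_of_ne_zero n hx, bAut_cons_cons_of_ne_zero n hx]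

theorem bAut_add (he0 : e 0 = 0) (n m : Fin r → ZMod p) :
    bAut e (n + m) = bAut e n * bAut e m := by
  funext v
  rw [TreeAut.mul_def, bAut_apply_pact_bAut he0]
  rcases List.eq_nil_or_concat v with rfl | ⟨l, i, rfl⟩
  · rfl
  · simp only [List.concat_eq_append, bAut_append_singleton]
    split_ifs
    · rw [dotp_add_left, add_comm, Equiv.addRight_add]
    · rfl

theorem bAut_zero (he0 : e 0 = 0) : bAut e (0 : Fin r → ZMod p) = 1 := by
  simpa using bAut_add he0 (0 : Fin r → ZMod p) 0

def bHom (he0 : e 0 = 0) : Multiplicative (Fin r → ZMod p) →* TreeAut p where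
  toFun n := bAut e n.toAdd
  map_one' := bAut_zero he0
  map_mul' n m := bAut_add he0 n.toAdd m.toAdd

theorem closure_range_bAut (he0 : e 0 = 0) :
    (Subgroup.closure (Set.range (bAut e)) : Set (TreeAut p)) = Set.range (bAut e) := by
  have hrange : Set.range (bAut e) = ((bHom he0).range : Set (TreeAut p)) := rfl
  rw [hrange, Subgroup.closure_eq]

theorem exists_bAut_ne_one {k : ZMod p} (hk : e k ≠ 0) : ∃ n, bAut e n ≠ 1 := by
  obtain ⟨j, hj⟩ := Function.ne_iff.mp hk
  refine ⟨Pi.single j 1, fun h => hj ?_⟩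
  have hlabel := Equiv.congr_fun (congrFun h [k]) 0
  simpa [bAut, dotp, Pi.single_apply, TreeAut.one_def] using hlabel

theorem NonConstant.exists_ne_zero (hnc : NonConstant e) : ∃ k, e k ≠ 0 := by
  obtain ⟨i, j, -, -, hij⟩ := hnc.1
  by_contra! h
  exact hij (by rw [h i, h j])

end DirectedGroup

section Normalizer

variable {p r : ℕ} {e : ZMod p → Fin r → ZMod p} {g : TreeAut p}

theorem sect_zero_conj_bAut (he0 : e 0 = 0) (hg0 : g [] 0 = 0) (n : Fin r → ZMod p) :
    sect g 0 * bAut e n * (sect g 0)⁻¹ = sect (g * bAut e n * g⁻¹) 0 := by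
  have hconj := sect_conj_of_apply_nil_eq (g := g) (h := bAut e n) (x := 0) rfl
  rw [hg0, sect_bAut_zero he0] at hconj
  exact hconj.symm

theorem apply_nil_zero_of_mem_normalizer (he0 : e 0 = 0) (hB : ∃ n, bAut e n ≠ 1)
    (hg : g ∈ Subgroup.normalizer (Set.range (bAut e))) : g [] 0 = 0 := by
  by_contra hx
  obtain ⟨n, hn⟩ := hB
  obtain ⟨m, hm⟩ := (Subgroup.mem_set_normalizer_iff.mp hg (bAut e n)).mp ⟨n, rfl⟩
  have hconj := sect_conj_of_apply_nil_eq (g := g) (h := bAut e n) (x := 0) rfl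
  rw [← hm, sect_bAut_of_ne_zero m hx, sect_bAut_zero he0] at hconj
  exact hn (eq_one_of_conj_eq_rootedAut (bAut_nil n) hconj.symm)

theorem sect_zero_conj_bAut_mem_range (he0 : e 0 = 0) (hB : ∃ n, bAut e n ≠ 1)
    (hg : g ∈ Subgroup.normalizer (Set.range (bAut e))) (n : Fin r → ZMod p) :
    sect g 0 * bAut e n * (sect g 0)⁻¹ ∈ Set.range (bAut e) := by
  rw [sect_zero_conj_bAut he0 (apply_nil_zero_of_mem_normalizer he0 hB hg)]
  obtain ⟨m, hm⟩ := (Subgroup.mem_set_normalizer_iff.mp hg (bAut e n)).mp ⟨n, rfl⟩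
  rw [← hm, sect_bAut_zero he0]
  exact ⟨m, rfl⟩

theorem sect_zero_mem_normalizer (he0 : e 0 = 0) (hB : ∃ n, bAut e n ≠ 1)
    (hg : g ∈ Subgroup.normalizer (Set.range (bAut e))) :
    sect g 0 ∈ Subgroup.normalizer (Set.range (bAut e)) := by
  have hinv : sect g⁻¹ 0 = (sect g 0)⁻¹ := by
    simpa [apply_nil_zero_of_mem_normalizer he0 hB hg] using sect_inv g 0
  refine Subgroup.mem_set_normalizer_iff.mpr fun h => ⟨?_, ?_⟩
  · rintro ⟨n, rfl⟩
    exact sect_zero_conj_bAut_mem_range he0 hB hg n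
  · rintro ⟨m, hm⟩
    have hmem := sect_zero_conj_bAut_mem_range he0 hB (inv_mem hg) m
    rw [hinv, inv_inv, hm] at hmem
    simpa [mul_assoc] using hmem

theorem sect_zero_mem_centralizer (he0 : e 0 = 0) (hB : ∃ n, bAut e n ≠ 1)
    (hg : g ∈ Subgroup.centralizer (Set.range (bAut e))) :
    sect g 0 ∈ Subgroup.centralizer (Set.range (bAut e)) := by
  have hg0 := apply_nil_zero_of_mem_normalizer he0 hB (Subgroup.centralizer_le_normalizer _ hg)
  refine Subgroup.mem_centralizer_iff.mpr ?_
  rintro _ ⟨n, rfl⟩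
  have hcomm : g * bAut e n * g⁻¹ = bAut e n := by
    rw [mul_inv_eq_iff_eq_mul, Subgroup.mem_centralizer_iff.mp hg _ ⟨n, rfl⟩]
  have hsect := sect_zero_conj_bAut he0 hg0 n
  rw [hcomm, sect_bAut_zero he0, mul_inv_eq_iff_eq_mul] at hsect
  exact hsect.symm

end Normalizer

theorem normalizer_directed_group_general (p r : ℕ)
    (e : ZMod p → Fin r → ZMod p) (he0 : e 0 = 0) (hnc : NonConstant e) :
    (∀ g ∈ Subgroup.normalizer
        ((Subgroup.closure (Set.range (bAut e)) : Subgroup (TreeAut p)) : Set (TreeAut p)), g [] 0 = 0) ∧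
    (∀ g ∈ Subgroup.normalizer
        ((Subgroup.closure (Set.range (bAut e)) : Subgroup (TreeAut p)) : Set (TreeAut p)),
      sect g 0 ∈ Subgroup.normalizer
        ((Subgroup.closure (Set.range (bAut e)) : Subgroup (TreeAut p)) : Set (TreeAut p))) ∧
    (∀ g ∈ Subgroup.centralizer
        ((Subgroup.closure (Set.range (bAut e)) : Subgroup (TreeAut p)) : Set (TreeAut p)),
      sect g 0 ∈ Subgroup.centralizer
        ((Subgroup.closure (Set.range (bAut e)) : Subgroup (TreeAut p)) : Set (TreeAut p))) := by
  obtain ⟨k, hk⟩ := hnc.exists_ne_zero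
  have hB := exists_bAut_ne_one hk
  rw [closure_range_bAut he0]
  exact ⟨fun _ => apply_nil_zero_of_mem_normalizer he0 hB,
    fun _ => sect_zero_mem_normalizer he0 hB, fun _ => sect_zero_mem_centralizer he0 hB⟩

/-- Let `G` be a non-constant multi-GGS group.  Then the normaliser of the directed group `B`
in `Aut(X*)` stabilises the vertex `0` of the first layer, and the section map at `0` maps
`Nor(B)` into `Nor(B)` and `Cen(B)` into `Cen(B)`. -/
theorem normalizer_directed_group (p r : ℕ) [Fact p.Prime] (hp : Odd p)
    (e : ZMod p → Fin r → ZMod p) (he0 : e 0 = 0) (hnc : NonConstant e) :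
    (∀ g ∈ Subgroup.normalizer
        ((Subgroup.closure (Set.range (bAut e)) : Subgroup (TreeAut p)) : Set (TreeAut p)), g [] 0 = 0) ∧
    (∀ g ∈ Subgroup.normalizer
        ((Subgroup.closure (Set.range (bAut e)) : Subgroup (TreeAut p)) : Set (TreeAut p)),
      sect g 0 ∈ Subgroup.normalizer
        ((Subgroup.closure (Set.range (bAut e)) : Subgroup (TreeAut p)) : Set (TreeAut p))) ∧
    (∀ g ∈ Subgroup.centralizer
        ((Subgroup.closure (Set.range (bAut e)) : Subgroup (TreeAut p)) : Set (TreeAut p)),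
      sect g 0 ∈ Subgroup.centralizer
        ((Subgroup.closure (Set.range (bAut e)) : Subgroup (TreeAut p)) : Set (TreeAut p))) :=
  normalizer_directed_group_general p r e he0 hnc
end

section
/- Let G be a non-constant multi-GGS group and g ∈ Stab_{G_reg}(1) with first-layer sections g|_k = a^{s_k} b^{n_k} y_k where n_k ∈ 𝔽_p^r and y_k ∈ G'. Then the A-exponents are forced: s_k = Σ_{i=0}^{p-1} n_i · e_{k-i} for each k ∈ {0,...,p-1}, where e_j denotes the j-th column of the defining matrix E (with e_0 = 0 and indices mod p). -/
open scoped commutatorElement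

/-!
Every element of `G` is *spinal*: below the vertices `u` of some level `N`, its nontrivial labels
sit only at the vertices `u 0^k j` with `j ≠ 0`.  For spinal `g` and `h`, the labels of `g` at the
children of a deep vertex do not see how `h` permutes these children, so the sum over all `w` of
level `D` of the translation amounts of the labels at `w j` is additive once `D` is large.  Its
germ as `D → ∞` and the translation amount of the root label are therefore homomorphisms on `G`
into abelian groups; they vanish on `G'`, and on `a^s b^n y` they take the values `s` and
`j ↦ n · e_j`.  The identity `rootShift (x|_k) = ∑ i, germ (x|_i) (k - i)` holds for the
generators `a`, `b^n`, `c̲` of `G_reg` and survives products and inverses, since the sections of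
`x z` are `x|_{k + t} z|_k` with `t` the root translation of `z`.
-/

namespace Subgroup

variable {T A : Type*} [Group T] [AddCommGroup A]

def AdditiveOn (G : Subgroup T) (f : T → A) : Prop :=
  ∀ g ∈ G, ∀ h ∈ G, f (g * h) = f g + f h

variable {G : Subgroup T} {f : T → A}

theorem AdditiveOn.map_one (hf : G.AdditiveOn f) : f 1 = 0 := by
  simpa using hf 1 G.one_mem 1 G.one_mem

theorem AdditiveOn.map_inv (hf : G.AdditiveOn f) {g : T} (hg : g ∈ G) : f g⁻¹ = -f g := by
  have := hf g hg g⁻¹ (G.inv_mem hg)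
  rw [mul_inv_cancel, hf.map_one] at this
  exact eq_neg_of_add_eq_zero_right this.symm

theorem AdditiveOn.eq_zero_of_mem_commutator (hf : G.AdditiveOn f) {y : T} (hy : y ∈ ⁅G, G⁆) :
    f y = 0 := by
  let φ : G →* Multiplicative A :=
    { toFun g := .ofAdd (f g)
      map_one' := by simp [hf.map_one]
      map_mul' g h := by simp [hf g g.2 h h.2] }
  rw [← G.map_subtype_commutator] at hy
  obtain ⟨g, hg, rfl⟩ := hy
  simpa [φ] using Abelianization.commutator_subset_ker φ hg

end Subgroup

theorem List.exists_eq_append_cons_cons {α : Type*} {N : ℕ} {w : List α}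
    (hw : N + 2 ≤ w.length) :
    ∃ u x y v, u.length = N ∧ w = u ++ x :: y :: v := by
  obtain ⟨x, y, v, hv⟩ : ∃ x y v, w.drop N = x :: y :: v := by
    match h : w.drop N with
    | x :: y :: v => exact ⟨x, y, v, rfl⟩
    | [] | [_] => have := congrArg List.length h; simp at this; omega
  exact ⟨w.take N, x, y, v, by simp; omega, by rw [← hv, List.take_append_drop]⟩

namespace MultiGGS

open Filter

variable {p : ℕ}

theorem pact_cons (L : TreeAut p) (x : ZMod p) (v : List (ZMod p)) :
    pact L (x :: v) = L [] x :: pact (sect L x) v := rfl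

theorem pact_length (L : TreeAut p) (v : List (ZMod p)) : (pact L v).length = v.length := by
  induction v generalizing L with
  | nil => rfl
  | cons x v ih => simp [pact_cons, ih]

theorem pact_eq_nil_iff {L : TreeAut p} {v : List (ZMod p)} : pact L v = [] ↔ v = [] := by
  rw [← List.length_eq_zero_iff, pact_length, List.length_eq_zero_iff]

def sectAt (g : TreeAut p) (u : List (ZMod p)) : TreeAut p := fun w => g (u ++ w)

theorem pact_append (L : TreeAut p) (u w : List (ZMod p)) :
    pact L (u ++ w) = pact L u ++ pact (sectAt L u) w := by
  induction u generalizing L with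
  | nil => rfl
  | cons x u ih => exact congrArg (L [] x :: ·) (ih (sect L x))

theorem pact_append_singleton (L : TreeAut p) (w : List (ZMod p)) (j : ZMod p) :
    pact L (w ++ [j]) = pact L w ++ [L w j] := by
  rw [pact_append]
  simp [pact, sectAt]

theorem sect_mul (g h : TreeAut p) (k : ZMod p) :
    sect (g * h) k = sect g (h [] k) * sect h k := rfl

theorem sect_inv (g : TreeAut p) (k : ZMod p) :
    sect g⁻¹ k = (sect g ((g [])⁻¹ k))⁻¹ := rfl

theorem mul_apply_nil (g h : TreeAut p) : (g * h) [] = g [] * h [] := rfl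

def IsRooted (g : TreeAut p) : Prop := ∀ w, w ≠ [] → g w = 1

theorem isRooted_one : IsRooted (1 : TreeAut p) := fun _ _ => rfl

theorem isRooted_rootedAut (σ : Equiv.Perm (ZMod p)) : IsRooted (rootedAut σ) :=
  fun _ hw => if_neg hw

theorem IsRooted.inv {g : TreeAut p} (hg : IsRooted g) : IsRooted g⁻¹ := by
  intro w hw
  rw [TreeAut.inv_def, hg _ fun h => hw (by rw [← pact_pactInv g w, h]; rfl), inv_one]

theorem rootedAut_mul (σ τ : Equiv.Perm (ZMod p)) :
    rootedAut σ * rootedAut τ = rootedAut (σ * τ) := by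
  funext w
  rcases eq_or_ne w [] with rfl | hw
  · rfl
  · rw [TreeAut.mul_def, isRooted_rootedAut _ _ hw,
      isRooted_rootedAut _ _ (mt pact_eq_nil_iff.mp hw), isRooted_rootedAut _ _ hw, mul_one]

theorem aAut_pow (m : ℕ) : aAut p ^ m = rootedAut (Equiv.addRight (m : ZMod p)) := by
  induction m with
  | zero => funext w; simp [rootedAut, TreeAut.one_def]
  | succ m ih =>
    rw [pow_succ, ih, aAut, rootedAut_mul, ← Equiv.addRight_add, Nat.cast_succ, add_comm]

def translationLabelled (p : ℕ) : Subgroup (TreeAut p) where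
  carrier := {g | ∀ v, ∃ c, g v = Equiv.addRight c}
  one_mem' _ := ⟨0, Equiv.addRight_zero.symm⟩
  mul_mem' {g h} hg hh v := by
    obtain ⟨c, hc⟩ := hg (pact h v)
    obtain ⟨d, hd⟩ := hh v
    exact ⟨d + c, by rw [TreeAut.mul_def, hc, hd, Equiv.addRight_add]⟩
  inv_mem' {g} hg v := by
    obtain ⟨c, hc⟩ := hg (pactInv g v)
    refine ⟨-c, Equiv.ext fun x => ?_⟩
    simp [TreeAut.inv_def, hc, Equiv.Perm.inv_def]

theorem apply_eq_add_apply_zero {g : TreeAut p} (hg : g ∈ translationLabelled p)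
    (v : List (ZMod p)) (x : ZMod p) : g v x = x + g v 0 := by
  obtain ⟨c, hc⟩ := hg v
  simp [hc]

theorem rootedAut_addRight_mem_translationLabelled (c : ZMod p) :
    rootedAut (Equiv.addRight c) ∈ translationLabelled p := fun v => by
  by_cases hv : v = []
  · exact ⟨c, if_pos hv⟩
  · exact ⟨0, (if_neg hv).trans Equiv.addRight_zero.symm⟩

def rootShift (g : TreeAut p) : ZMod p := g [] 0

theorem rootShift_mul {g : TreeAut p} (hg : g ∈ translationLabelled p) (h : TreeAut p) :
    rootShift (g * h) = rootShift g + rootShift h := by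
  rw [rootShift, mul_apply_nil, Equiv.Perm.mul_apply, apply_eq_add_apply_zero hg, add_comm]; rfl

/-- The vertices `0^k j` with `j ≠ 0`. -/
def IsSpineVertex : List (ZMod p) → Prop
  | [] => False
  | x :: w => (w = [] ∧ x ≠ 0) ∨ (x = 0 ∧ IsSpineVertex w)

@[simp] theorem isSpineVertex_nil : ¬ IsSpineVertex ([] : List (ZMod p)) := id

@[simp] theorem isSpineVertex_cons (x : ZMod p) (w : List (ZMod p)) :
    IsSpineVertex (x :: w) ↔ (w = [] ∧ x ≠ 0) ∨ (x = 0 ∧ IsSpineVertex w) := Iff.rfl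

theorem IsSpineVertex.tail {x : ZMod p} {w : List (ZMod p)} (h : IsSpineVertex (x :: w))
    (hw : w ≠ []) : IsSpineVertex w := by
  simp_all

theorem IsSpineVertex.exists_ne_zero {w : List (ZMod p)} (h : IsSpineVertex w) :
    ∃ z ∈ w, z ≠ 0 := by
  induction w with
  | nil => exact h.elim
  | cons x w ih =>
    rcases h with ⟨-, hx⟩ | ⟨-, hw⟩
    · exact ⟨x, List.mem_cons_self, hx⟩
    · obtain ⟨z, hz, hz0⟩ := ih hw
      exact ⟨z, List.mem_cons_of_mem _ hz, hz0⟩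

theorem IsSpineVertex.forall_eq_zero_of_append_singleton {w : List (ZMod p)} {j : ZMod p}
    (h : IsSpineVertex (w ++ [j])) : ∀ z ∈ w, z = 0 := by
  induction w with
  | nil => simp
  | cons x w ih =>
    rcases h with ⟨hw, -⟩ | ⟨rfl, hw⟩
    · simp at hw
    · simpa using ih hw

theorem isSpineVertex_append_singleton {u : List (ZMod p)} (hu : ∀ z ∈ u, z = 0) {j : ZMod p}
    (hj : j ≠ 0) : IsSpineVertex (u ++ [j]) := by
  induction u with
  | nil => simpa using hj
  | cons x u ih => simp_all

def IsDirected (d : TreeAut p) : Prop := ∀ w, d w ≠ 1 → IsSpineVertex w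

def IsSpinal (N : ℕ) (g : TreeAut p) : Prop :=
  ∀ u w, u.length = N → w ≠ [] → g (u ++ w) ≠ 1 → IsSpineVertex w

theorem IsDirected.nil {d : TreeAut p} (hd : IsDirected d) : d [] = 1 :=
  not_not.mp (mt (hd []) id)

theorem IsDirected.isSpinal {d : TreeAut p} (hd : IsDirected d) : IsSpinal 0 d :=
  fun u w hu _ => by rw [List.length_eq_zero_iff.mp hu]; exact hd w

theorem IsRooted.isSpinal {g : TreeAut p} (hg : IsRooted g) : IsSpinal 0 g :=
  fun u w hu hw hne => by rw [List.length_eq_zero_iff.mp hu] at hne; exact (hne (hg w hw)).elim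

theorem IsSpinal.sect_zero {s : TreeAut p} (hs : IsSpinal 0 s) : IsDirected (sect s 0) :=
  fun w hw => ((hs [] (0 :: w) rfl (List.cons_ne_nil _ _) hw).resolve_left (by simp)).2

theorem IsDirected.sect_zero {d : TreeAut p} (hd : IsDirected d) : IsDirected (sect d 0) :=
  hd.isSpinal.sect_zero

theorem IsSpinal.pact_sect_cons {s : TreeAut p} (hs : IsSpinal 0 s) {x : ZMod p} (hx : x ≠ 0)
    (y : ZMod p) (w : List (ZMod p)) : pact (sect s x) (y :: w) = s [x] y :: w := by
  have hsect : sect (sect s x) y = 1 := funext fun v => by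
    by_contra hne
    have := hs [] (x :: y :: v) rfl (List.cons_ne_nil _ _) hne
    simp_all
  rw [pact_cons, hsect]
  exact congrArg _ (pact_one w)

theorem IsDirected.isSpineVertex_pact_iff {d : TreeAut p} (hd : IsDirected d)
    (w : List (ZMod p)) : IsSpineVertex (pact d w) ↔ IsSpineVertex w := by
  induction w generalizing d with
  | nil => rfl
  | cons x w ih =>
    rw [pact_cons, hd.nil, Equiv.Perm.one_apply]
    rcases eq_or_ne x 0 with rfl | hx
    · simp [ih hd.sect_zero]
    · simp [hx, pact_eq_nil_iff]

theorem IsDirected.eq_zero_of_pact {d : TreeAut p} (hd : IsDirected d) {w : List (ZMod p)}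
    (h : ∀ z ∈ pact d w, z = 0) : ∀ z ∈ w, z = 0 := by
  induction w generalizing d with
  | nil => simp
  | cons x w ih =>
    rw [pact_cons, hd.nil, Equiv.Perm.one_apply, List.forall_mem_cons] at h
    obtain ⟨rfl, hw⟩ := h
    exact List.forall_mem_cons.mpr ⟨rfl, ih hd.sect_zero hw⟩

theorem IsDirected.inv {d : TreeAut p} (hd : IsDirected d) : IsDirected d⁻¹ := by
  intro w hw
  rw [TreeAut.inv_def, ne_eq, inv_eq_one] at hw
  simpa [pact_pactInv] using (hd.isSpineVertex_pact_iff _).mpr (hd _ hw)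

theorem IsSpinal.mono {g : TreeAut p} {N M : ℕ} (hg : IsSpinal N g) (hNM : N ≤ M) :
    IsSpinal M g := by
  induction M, hNM using Nat.le_induction with
  | base => exact hg
  | succ M _ ih =>
    intro u w hu hw hne
    obtain ⟨u, x, rfl⟩ := (List.eq_nil_or_concat' u).resolve_left (by rintro rfl; simp at hu)
    rw [List.append_assoc] at hne
    exact (ih u (x :: w) (by simpa using hu) (List.cons_ne_nil _ _) hne).tail hw

theorem IsSpinal.isSpineVertex_of_pact {s : TreeAut p} (hs : IsSpinal 0 s) {x y : ZMod p}
    {w : List (ZMod p)} (hw : w ≠ []) (h : IsSpineVertex (pact s (x :: y :: w))) :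
    IsSpineVertex w := by
  rw [pact_cons] at h
  have h' := h.tail (mt pact_eq_nil_iff.mp (List.cons_ne_nil _ _))
  rcases eq_or_ne x 0 with rfl | hx
  · exact (((hs.sect_zero).isSpineVertex_pact_iff _).mp h').tail hw
  · rw [hs.pact_sect_cons hx] at h'
    exact h'.tail hw

theorem IsSpinal.exists_ne_zero_pact {s : TreeAut p} (hs : IsSpinal 0 s) {x y : ZMod p}
    {w : List (ZMod p)} (h : IsSpineVertex (x :: y :: w)) :
    ∃ z ∈ pact s (x :: y :: w), z ≠ 0 := by
  obtain ⟨rfl, hyw⟩ := h.resolve_left (by simp)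
  by_contra! hzero
  rw [pact_cons, List.forall_mem_cons] at hzero
  obtain ⟨z, hz, hz0⟩ := hyw.exists_ne_zero
  exact hz0 (hs.sect_zero.eq_zero_of_pact hzero.2 z hz)

theorem IsSpinal.sectAt {g : TreeAut p} {N : ℕ} (hg : IsSpinal N g) {u : List (ZMod p)}
    (hu : u.length = N) : IsSpinal 0 (sectAt g u) := by
  intro v w hv hw hne
  rw [List.length_eq_zero_iff.mp hv] at hne
  exact hg u w hu hw hne

/-- Two more levels are needed: a label of `h` on level `N + 1` may move the next letter onto a
spine of `g`. -/
theorem IsSpinal.mul {g h : TreeAut p} {N : ℕ} (hg : IsSpinal N g) (hh : IsSpinal N h) :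
    IsSpinal (N + 2) (g * h) := by
  intro u' w hu' hw hne
  obtain ⟨u, x, y, v, hu, rfl⟩ := List.exists_eq_append_cons_cons (N := N) (w := u') (by omega)
  obtain rfl : v = [] := by simpa [hu] using hu'
  rw [show u ++ [x, y] ++ w = u ++ x :: y :: w by simp, TreeAut.mul_def] at hne
  by_cases hh1 : h (u ++ x :: y :: w) = 1
  · rw [hh1, mul_one, pact_append] at hne
    exact (hh.sectAt hu).isSpineVertex_of_pact hw
      (hg _ _ (by rw [pact_length, hu]) (mt pact_eq_nil_iff.mp (List.cons_ne_nil _ _)) hne)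
  · exact ((hh u _ hu (List.cons_ne_nil _ _) hh1).tail (List.cons_ne_nil _ _)).tail hw

section LevelSums

def levelPerm (h : TreeAut p) (D : ℕ) : Equiv.Perm (List.Vector (ZMod p) D) where
  toFun v := ⟨pact h v.toList, by rw [pact_length, v.toList_length]⟩
  invFun v := ⟨pactInv h v.toList, by rw [← pact_length h, pact_pactInv, v.toList_length]⟩
  left_inv v := Subtype.ext (pactInv_pact h v.toList)
  right_inv v := Subtype.ext (pact_pactInv h v.toList)

def constGerm : ZMod p →+ (atTop : Filter ℕ).Germ (ZMod p) :=
  (Germ.coeAddHom atTop).comp (Pi.constAddMonoidHom ℕ (ZMod p))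

theorem constGerm_injective : Function.Injective (constGerm (p := p)) :=
  fun _ _ h => Germ.const_inj.mp h

variable [NeZero p]

def levelLabelSum (D : ℕ) (g : TreeAut p) (j : ZMod p) : ZMod p :=
  ∑ v : List.Vector (ZMod p) D, g (v.toList ++ [j]) 0

/-- Where `h` has a nontrivial label deep below level `N`, the vertex lies on a spine and its
image is off every spine of `g`, so that `g` does not see how `h` permutes its children. -/
theorem IsSpinal.apply_pact_append_singleton {g h : TreeAut p} {N : ℕ} (hg : IsSpinal N g)
    (hh : IsSpinal N h) {w : List (ZMod p)} (hw : N + 2 ≤ w.length) (j : ZMod p) :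
    g (pact h w ++ [h w j]) = g (pact h w ++ [j]) := by
  by_cases hh1 : h w = 1
  · rw [hh1, Equiv.Perm.one_apply]
  obtain ⟨u, x, y, v, hu, rfl⟩ := List.exists_eq_append_cons_cons hw
  have hspine := hh u _ hu (List.cons_ne_nil _ _) hh1
  have htrivial : ∀ k, g (pact h (u ++ x :: y :: v) ++ [k]) = 1 := by
    intro k
    by_contra hne
    rw [pact_append, List.append_assoc] at hne
    have := hg _ _ (by rw [pact_length, hu]) (by simp) hne
    obtain ⟨z, hz, hz0⟩ := (hh.sectAt hu).exists_ne_zero_pact hspine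
    exact hz0 (this.forall_eq_zero_of_append_singleton z hz)
  rw [htrivial, htrivial]

theorem levelLabelSum_mul {g h : TreeAut p} {N D : ℕ} (hgt : g ∈ translationLabelled p)
    (hg : IsSpinal N g) (hh : IsSpinal N h) (hD : N + 2 ≤ D) (j : ZMod p) :
    levelLabelSum D (g * h) j = levelLabelSum D g j + levelLabelSum D h j := by
  have hperm := Equiv.sum_comp (levelPerm h D) fun v => g (v.toList ++ [j]) 0
  refine (Finset.sum_congr rfl fun v _ => ?_).trans (Finset.sum_add_distrib.trans
    (congrArg (· + levelLabelSum D h j) hperm))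
  rw [TreeAut.mul_def, pact_append_singleton, Equiv.Perm.mul_apply,
    hg.apply_pact_append_singleton hh (by rw [v.toList_length]; exact hD),
    apply_eq_add_apply_zero hgt, add_comm]
  rfl

theorem levelLabelSum_eq_zero_of_isRooted {g : TreeAut p} (hg : IsRooted g) (D : ℕ) (j : ZMod p) :
    levelLabelSum D g j = 0 :=
  Finset.sum_eq_zero fun v _ => by rw [hg _ (by simp)]; rfl

def labelGerm (g : TreeAut p) (j : ZMod p) : (atTop : Filter ℕ).Germ (ZMod p) :=
  ↑(fun D => levelLabelSum D g j)

theorem labelGerm_eq_zero_of_isRooted {g : TreeAut p} (hg : IsRooted g) : labelGerm g = 0 :=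
  funext fun j => congrArg _ (funext fun D => levelLabelSum_eq_zero_of_isRooted hg D j)

theorem labelGerm_mul {g h : TreeAut p} {N M : ℕ} (hgt : g ∈ translationLabelled p)
    (hg : IsSpinal N g) (hh : IsSpinal M h) :
    labelGerm (g * h) = labelGerm g + labelGerm h := by
  funext j
  refine Germ.coe_eq.mpr (eventually_atTop.mpr ⟨max N M + 2, fun D hD => ?_⟩)
  exact levelLabelSum_mul hgt (hg.mono (le_max_left N M)) (hh.mono (le_max_right N M)) hD j

end LevelSums

section GGS

variable {r : ℕ} {e : ZMod p → Fin r → ZMod p}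

theorem dotp_zero_right (μ : Fin r → ZMod p) : dotp μ 0 = 0 := by
  simp [dotp]

theorem aAut_mem_GGS : aAut p ∈ GGS e := Subgroup.subset_closure (Or.inl rfl)

theorem bAut_mem_GGS (μ : Fin r → ZMod p) : bAut e μ ∈ GGS e :=
  Subgroup.subset_closure (Or.inr ⟨μ, rfl⟩)

theorem aAut_pow_mul_bAut_mem_GGS (m : ℕ) (n : Fin r → ZMod p) :
    aAut p ^ m * bAut e n ∈ GGS e :=
  mul_mem (pow_mem aAut_mem_GGS m) (bAut_mem_GGS n)

theorem bAut_nil (μ : Fin r → ZMod p) : bAut e μ [] = 1 := rfl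

theorem bAut_append_singleton (μ : Fin r → ZMod p) (u : List (ZMod p)) (i : ZMod p) :
    bAut e μ (u ++ [i]) = if ∀ x ∈ u, x = 0 then Equiv.addRight (dotp μ (e i)) else 1 := by
  simp [bAut]

theorem isDirected_bAut (he0 : e 0 = 0) (μ : Fin r → ZMod p) : IsDirected (bAut e μ) := by
  intro w hw
  obtain ⟨u, i, rfl⟩ := (List.eq_nil_or_concat' w).resolve_left (by rintro rfl; exact hw rfl)
  rw [bAut_append_singleton] at hw
  split_ifs at hw with hu
  · refine isSpineVertex_append_singleton hu fun hi => hw ?_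
    rw [hi, he0, dotp_zero_right, Equiv.addRight_zero]
  · exact (hw rfl).elim

theorem sect_bAut_zero (he0 : e 0 = 0) (μ : Fin r → ZMod p) :
    sect (bAut e μ) 0 = bAut e μ := by
  funext w
  obtain rfl | ⟨u, i, rfl⟩ := List.eq_nil_or_concat' w
  · exact (isDirected_bAut he0 μ).sect_zero.nil.trans (bAut_nil μ).symm
  · show bAut e μ ((0 :: u) ++ [i]) = _
    rw [bAut_append_singleton, bAut_append_singleton]
    simp

theorem sect_bAut_of_ne_zero (μ : Fin r → ZMod p) {k : ZMod p} (hk : k ≠ 0) :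
    sect (bAut e μ) k = rootedAut (Equiv.addRight (dotp μ (e k))) := by
  funext w
  obtain rfl | ⟨u, i, rfl⟩ := List.eq_nil_or_concat' w
  · exact bAut_append_singleton μ [] k
  · show bAut e μ ((k :: u) ++ [i]) = _
    rw [bAut_append_singleton, if_neg (by simp [hk])]
    simp [rootedAut]

theorem sect_cAut (k : ZMod p) :
    sect (cAut e) k =
      if k = 0 then ⁅bAut e fun j => if (j : ℕ) = 0 then 1 else 0, aAut p⁆ else 1 := by
  funext v
  show embAt 1 _ (k :: v) = _
  unfold embAt
  split_ifs with h1 h2 h2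
  · rfl
  · exact (h2 (List.cons_prefix_cons.mp h1).1.symm).elim
  · exact (h1 (by simp [h2])).elim
  · rfl

theorem GGS_le_translationLabelled : GGS e ≤ translationLabelled p := by
  refine Subgroup.closure_le _ |>.mpr ?_
  rintro _ (rfl | ⟨μ, rfl⟩) v
  · exact rootedAut_addRight_mem_translationLabelled 1 v
  · obtain rfl | ⟨u, i, rfl⟩ := List.eq_nil_or_concat' v
    · exact ⟨0, Equiv.addRight_zero.symm⟩
    · rw [bAut_append_singleton]
      split_ifs
      exacts [⟨_, rfl⟩, ⟨0, Equiv.addRight_zero.symm⟩]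

theorem cAut_mem_translationLabelled : cAut e ∈ translationLabelled p := fun v => by
  unfold cAut embAt
  split_ifs
  · exact GGS_le_translationLabelled (Subgroup.commutator_le_self (GGS e)
      (Subgroup.commutator_mem_commutator (bAut_mem_GGS _) aAut_mem_GGS)) _
  · exact ⟨0, Equiv.addRight_zero.symm⟩

theorem exists_isSpinal_of_mem_GGS (he0 : e 0 = 0) {g : TreeAut p} (hg : g ∈ GGS e) :
    ∃ N, IsSpinal N g := by
  induction hg using Subgroup.closure_induction'' with
  | mem x hx =>
    rcases hx with rfl | ⟨μ, rfl⟩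
    exacts [⟨0, (isRooted_rootedAut _).isSpinal⟩, ⟨0, (isDirected_bAut he0 μ).isSpinal⟩]
  | inv_mem x hx =>
    rcases hx with rfl | ⟨μ, rfl⟩
    exacts [⟨0, (isRooted_rootedAut _).inv.isSpinal⟩,
      ⟨0, (isDirected_bAut he0 μ).inv.isSpinal⟩]
  | one => exact ⟨0, isRooted_one.isSpinal⟩
  | mul x y _ _ hx hy =>
    obtain ⟨N, hx⟩ := hx
    obtain ⟨M, hy⟩ := hy
    exact ⟨max N M + 2, (hx.mono (le_max_left N M)).mul (hy.mono (le_max_right N M))⟩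

theorem additiveOn_rootShift : (GGS e).AdditiveOn rootShift :=
  fun _ hg h _ => rootShift_mul (GGS_le_translationLabelled hg) h

variable [NeZero p]

theorem rootedAut_addRight_mem_GGS (c : ZMod p) : rootedAut (Equiv.addRight c) ∈ GGS e := by
  rw [← ZMod.natCast_zmod_val c, ← aAut_pow]
  exact pow_mem aAut_mem_GGS _

theorem levelLabelSum_bAut (μ : Fin r → ZMod p) (D : ℕ) (j : ZMod p) :
    levelLabelSum D (bAut e μ) j = dotp μ (e j) := by
  have hzero : ∀ v : List.Vector (ZMod p) D,
      (∀ x ∈ v.toList, x = 0) ↔ v = List.Vector.replicate D 0 := fun v => by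
    rw [← List.Vector.toList_injective.eq_iff]
    show _ ↔ v.toList = List.replicate D 0
    simp [List.eq_replicate_iff]
  have hterm : ∀ v : List.Vector (ZMod p) D, bAut e μ (v.toList ++ [j]) 0 =
      if v = List.Vector.replicate D 0 then dotp μ (e j) else 0 := fun v => by
    rw [bAut_append_singleton]
    split_ifs with h1 h2 h2 <;> simp_all
  simp only [levelLabelSum, hterm, Finset.sum_ite_eq', Finset.mem_univ, if_true]

theorem labelGerm_bAut (μ : Fin r → ZMod p) :
    labelGerm (bAut e μ) = fun j => constGerm (dotp μ (e j)) :=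
  funext fun j => congrArg _ (funext fun D => levelLabelSum_bAut μ D j)

theorem additiveOn_labelGerm (he0 : e 0 = 0) : (GGS e).AdditiveOn labelGerm := by
  intro g hg h hh
  obtain ⟨N, hgN⟩ := exists_isSpinal_of_mem_GGS he0 hg
  obtain ⟨M, hhM⟩ := exists_isSpinal_of_mem_GGS he0 hh
  exact labelGerm_mul (GGS_le_translationLabelled hg) hgN hhM

theorem rootShift_aAut_pow_mul_bAut_mul {y : TreeAut p} (hy : y ∈ ⁅GGS e, GGS e⁆) (s : ZMod p)
    (n : Fin r → ZMod p) : rootShift (aAut p ^ s.val * bAut e n * y) = s := by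
  rw [additiveOn_rootShift (e := e) _ (aAut_pow_mul_bAut_mem_GGS _ n) _
      (Subgroup.commutator_le_self _ hy),
    (additiveOn_rootShift (e := e)).eq_zero_of_mem_commutator hy, add_zero,
    rootShift_mul (GGS_le_translationLabelled (pow_mem (aAut_mem_GGS (e := e)) _)), aAut_pow,
    ZMod.natCast_zmod_val]
  simp [rootShift, rootedAut, bAut_nil]

theorem labelGerm_aAut_pow_mul_bAut_mul (he0 : e 0 = 0) {y : TreeAut p}
    (hy : y ∈ ⁅GGS e, GGS e⁆) (s : ZMod p) (n : Fin r → ZMod p) :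
    labelGerm (aAut p ^ s.val * bAut e n * y) = fun j => constGerm (dotp n (e j)) := by
  have hf := additiveOn_labelGerm he0
  rw [hf _ (aAut_pow_mul_bAut_mem_GGS _ n) _ (Subgroup.commutator_le_self _ hy),
    hf.eq_zero_of_mem_commutator hy, add_zero,
    hf _ (pow_mem aAut_mem_GGS _) _ (bAut_mem_GGS n), labelGerm_bAut, aAut_pow,
    labelGerm_eq_zero_of_isRooted (isRooted_rootedAut _), zero_add]

/-- The identity `s_k = ∑ i, n_i · e_{k-i}` for `x|_k = a^{s_k} b^{n_k} y_k`, read through the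
invariants of the sections. -/
def IsForced (e : ZMod p → Fin r → ZMod p) (x : TreeAut p) : Prop :=
  ∀ k, sect x k ∈ GGS e ∧
    constGerm (rootShift (sect x k)) = ∑ i, labelGerm (sect x i) (k - i)

theorem isForced_of_sect_mem_commutator (he0 : e 0 = 0) {x : TreeAut p}
    (hx : ∀ k, sect x k ∈ ⁅GGS e, GGS e⁆) : IsForced e x := fun k =>
  ⟨Subgroup.commutator_le_self _ (hx k), by
    simp [additiveOn_rootShift.eq_zero_of_mem_commutator (hx k),
      (additiveOn_labelGerm he0).eq_zero_of_mem_commutator (hx _)]⟩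

theorem isForced_bAut (he0 : e 0 = 0) (μ : Fin r → ZMod p) : IsForced e (bAut e μ) := by
  intro k
  refine ⟨?_, ?_⟩
  · rcases eq_or_ne k 0 with rfl | hk
    · exact (sect_bAut_zero he0 μ).symm ▸ bAut_mem_GGS μ
    · exact (sect_bAut_of_ne_zero μ hk).symm ▸ rootedAut_addRight_mem_GGS _
  · rw [Fintype.sum_eq_single 0 fun i hi => by
      rw [sect_bAut_of_ne_zero μ hi, labelGerm_eq_zero_of_isRooted (isRooted_rootedAut _)]; rfl,
      sect_bAut_zero he0, labelGerm_bAut, sub_zero]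
    congr 1
    rcases eq_or_ne k 0 with rfl | hk
    · rw [sect_bAut_zero he0, he0, dotp_zero_right]; rfl
    · rw [sect_bAut_of_ne_zero μ hk]; simp [rootShift, rootedAut]

theorem IsForced.mul (he0 : e 0 = 0) {x z : TreeAut p} (hx : IsForced e x) (hz : IsForced e z)
    (hzt : z ∈ translationLabelled p) : IsForced e (x * z) := by
  obtain ⟨t, ht⟩ := hzt []
  have hsect : ∀ k, sect (x * z) k = sect x (k + t) * sect z k := fun k => by
    rw [sect_mul, ht]; rfl
  intro k
  refine ⟨hsect k ▸ mul_mem (hx _).1 (hz k).1, ?_⟩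
  simp only [hsect]
  rw [additiveOn_rootShift _ (hx _).1 _ (hz k).1, map_add, (hx _).2, (hz k).2]
  simp only [additiveOn_labelGerm he0 _ (hx _).1 _ (hz _).1, Pi.add_apply, Finset.sum_add_distrib]
  congr 1
  exact Fintype.sum_equiv (Equiv.subRight t) _ _ fun i => by
    simp only [Equiv.subRight_apply, sub_add_cancel]
    congr 1
    ring

theorem IsForced.inv (he0 : e 0 = 0) {x : TreeAut p} (hx : IsForced e x)
    (hxt : x ∈ translationLabelled p) : IsForced e x⁻¹ := by
  obtain ⟨t, ht⟩ := hxt []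
  have hsect : ∀ k, sect x⁻¹ k = (sect x (k - t))⁻¹ := fun k => by
    rw [sect_inv, ht]
    simp [Equiv.Perm.inv_def, sub_eq_add_neg]
  intro k
  refine ⟨hsect k ▸ inv_mem (hx _).1, ?_⟩
  simp only [hsect]
  rw [additiveOn_rootShift.map_inv (hx _).1, map_neg, (hx _).2]
  simp only [(additiveOn_labelGerm he0).map_inv (hx _).1, Pi.neg_apply, Finset.sum_neg_distrib]
  congr 1
  exact Fintype.sum_equiv (Equiv.addRight t) _ _ fun i => by
    simp only [Equiv.coe_addRight, add_sub_cancel_right]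
    congr 1
    ring

theorem isForced_of_mem_GGSreg (he0 : e 0 = 0) {g : TreeAut p} (hg : g ∈ GGSreg e) :
    IsForced e g := by
  suffices g ∈ translationLabelled p ∧ IsForced e g from this.2
  induction hg using Subgroup.closure_induction with
  | mem x hx =>
    rcases hx with (rfl | rfl) | ⟨μ, rfl⟩
    · refine ⟨GGS_le_translationLabelled (aAut_mem_GGS (e := e)),
        isForced_of_sect_mem_commutator he0 fun k => ?_⟩
      rw [show sect (aAut p) k = 1 from
        funext fun v => isRooted_rootedAut (Equiv.addRight 1) (k :: v) (List.cons_ne_nil _ _)]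
      exact one_mem _
    · refine ⟨cAut_mem_translationLabelled, isForced_of_sect_mem_commutator he0 fun k => ?_⟩
      rw [sect_cAut]
      split_ifs
      exacts [Subgroup.commutator_mem_commutator (bAut_mem_GGS _) aAut_mem_GGS, one_mem _]
    · exact ⟨GGS_le_translationLabelled (bAut_mem_GGS μ), isForced_bAut he0 μ⟩
  | one => exact ⟨one_mem _, isForced_of_sect_mem_commutator he0 fun _ => one_mem _⟩
  | mul x z _ _ hx hz => exact ⟨mul_mem hx.1 hz.1, hx.2.mul he0 hz.2 hz.1⟩
  | inv x _ hx => exact ⟨inv_mem hx.1, hx.2.inv he0 hx.1⟩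

end GGS

end MultiGGS

theorem forced_A_coordinates_general (p r : ℕ) [NeZero p]
    (e : ZMod p → Fin r → ZMod p) (he0 : e 0 = 0)
    (g : TreeAut p) (hg : g ∈ GGSreg e)
    (s : ZMod p → ZMod p) (n : ZMod p → Fin r → ZMod p) (y : ZMod p → TreeAut p)
    (hy : ∀ k : ZMod p, y k ∈ ⁅GGS e, GGS e⁆)
    (hsec : ∀ k : ZMod p, sect g k = aAut p ^ (s k).val * bAut e (n k) * y k) :
    ∀ k : ZMod p, s k = ∑ i : ZMod p, dotp (n i) (e (k - i)) := by
  intro k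
  have hrel := (MultiGGS.isForced_of_mem_GGSreg he0 hg k).2
  simp only [hsec, MultiGGS.rootShift_aAut_pow_mul_bAut_mul (hy _),
    MultiGGS.labelGerm_aAut_pow_mul_bAut_mul he0 (hy _)] at hrel
  exact MultiGGS.constGerm_injective (hrel.trans (map_sum _ _ _).symm)

/-- Let `G` be a non-constant multi-GGS group and `g ∈ Stab_{G_reg}(1)` with first-layer
sections `g|_k = a^{s_k} b^{n_k} y_k`, where `n_k ∈ 𝔽_p^r` and `y_k ∈ G'`.  Then the
`A`-exponents are forced: `s_k = Σ_{i=0}^{p-1} n_i · e_{k-i}` for each `k`, where `e_j` is the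
`j`-th column of the defining matrix `E` (with `e_0 = 0`, indices mod `p`). -/
theorem forced_A_coordinates (p r : ℕ) [Fact p.Prime] [NeZero p] (hp : Odd p)
    (e : ZMod p → Fin r → ZMod p) (he0 : e 0 = 0) (hnc : NonConstant e)
    (g : TreeAut p) (hg : g ∈ GGSreg e) (hstab : g [] = 1)
    (s : ZMod p → ZMod p) (n : ZMod p → Fin r → ZMod p) (y : ZMod p → TreeAut p)
    (hy : ∀ k : ZMod p, y k ∈ ⁅GGS e, GGS e⁆)
    (hsec : ∀ k : ZMod p, sect g k = aAut p ^ (s k).val * bAut e (n k) * y k) :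
    ∀ k : ZMod p, s k = ∑ i : ZMod p, dotp (n i) (e (k - i)) :=
  forced_A_coordinates_general p r e he0 g hg s n y hy hsec
end
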